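/- For every real number c, the trace of the product of matrix exponentials satisfies tr( exp(c·τ₁) · exp(c·τ₂) · exp(c·τ₃) ) = 2·cos³(c/2) − 2·sin³(c/2). (In particular this conjugation-invariant function on the isotropic configuration space is not symmetric under c → −c, exhibiting a gauge-invariant function not captured by spin networks with a single edge.) -/

import Mathlib

/-! Each `J = -i σₖ` squares to `-1`, so `z ↦ re z + im z • J` is a continuous `ℝ`-algebra map
`ℂ → M₂(ℂ)`; it commutes with `exp` and turns Euler's formula into
`exp (c τₖ) = exp ((c/2) J) = cos (c/2) + sin (c/2) J`. The three `Jₖ` multiply like the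
quaternion units (`J₀ J₁ = J₂`), so only the scalar parts `a³` and `b³ J₀ J₁ J₂ = -b³` of the product
survive the trace, each with weight `tr 1 = 2`. -/

attribute [local instance] Matrix.linftyOpNormedAddCommGroup Matrix.linftyOpNormedRing
  Matrix.linftyOpNormedAlgebra

/-- The Pauli matrices σ₁, σ₂, σ₃ (indexed by `Fin 3`). -/
noncomputable def σ : Fin 3 → Matrix (Fin 2) (Fin 2) ℂ :=
  ![!![0, 1; 1, 0], !![0, -Complex.I; Complex.I, 0], !![1, 0; 0, -1]]

noncomputable def τ (i : Fin 3) : Matrix (Fin 2) (Fin 2) ℂ :=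
  (-(Complex.I / 2)) • σ i

open Complex in
theorem exp_real_smul_eq_of_mul_self_eq_neg_one {A : Type*} [NormedRing A] [NormedAlgebra ℝ A]
    {J : A} (hJ : J * J = -1) (t : ℝ) :
    NormedSpace.exp (t • J) = Real.cos t • (1 : A) + Real.sin t • J := by
  -- `map_exp` needs some `ℚ`-algebra structure on `A`; `NormedSpace.exp` does not depend on which.
  let _ : Algebra ℚ A := Algebra.compHom A (algebraMap ℚ ℝ)
  have h := NormedSpace.map_exp (liftAux J hJ)
    (liftAux J hJ).toLinearMap.continuous_of_finiteDimensional (t * I)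
  rw [← Complex.exp_eq_exp_ℂ, Complex.exp_mul_I] at h
  simpa [Algebra.algebraMap_eq_smul_one, cos_ofReal_re, sin_ofReal_re] using h.symm

theorem σ_mul_self (i : Fin 3) : σ i * σ i = 1 := by
  fin_cases i <;> ext j k <;> fin_cases j <;> fin_cases k <;> simp [σ, Matrix.mul_apply]

theorem ofReal_smul_τ (c : ℝ) (i : Fin 3) : (c : ℂ) • τ i = (c / 2) • (-Complex.I • σ i) := by
  simp only [τ, ← Complex.coe_smul, smul_smul]
  congr 1
  push_cast
  ring

theorem exp_ofReal_smul_τ (c : ℝ) (i : Fin 3) :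
    NormedSpace.exp ((c : ℂ) • τ i) =
      Real.cos (c / 2) • (1 : Matrix (Fin 2) (Fin 2) ℂ) + Real.sin (c / 2) • (-Complex.I • σ i) := by
  rw [ofReal_smul_τ]
  refine exp_real_smul_eq_of_mul_self_eq_neg_one ?_ _
  rw [smul_mul_smul_comm, σ_mul_self]
  simp

theorem trace_prod_smul_one_add_smul_neg_I_smul_σ (a b : ℝ) :
    ((a • 1 + b • (-Complex.I • σ 0)) * (a • 1 + b • (-Complex.I • σ 1)) *
        (a • 1 + b • (-Complex.I • σ 2)) : Matrix (Fin 2) (Fin 2) ℂ).trace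
      = 2 * (a : ℂ) ^ 3 - 2 * (b : ℂ) ^ 3 := by
  rw [Matrix.trace_fin_two]
  simp only [σ, Matrix.one_fin_two, Matrix.mul_apply, Fin.sum_univ_two, Matrix.add_apply,
    Matrix.smul_apply, Matrix.of_apply, Matrix.cons_val', Matrix.cons_val_zero,
    Matrix.cons_val_one, Matrix.cons_val, Matrix.cons_val_fin_one, Complex.real_smul, smul_eq_mul]
  linear_combination 2 * (b : ℂ) ^ 3 * (1 - Complex.I ^ 2) * Complex.I_sq

theorem trace_of_isotropic_holonomy_product (c : ℝ) :
    (NormedSpace.exp ((c : ℂ) • τ 0) * NormedSpace.exp ((c : ℂ) • τ 1) *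
        NormedSpace.exp ((c : ℂ) • τ 2)).trace
      = 2 * ((Real.cos (c / 2) : ℝ) : ℂ) ^ 3 - 2 * ((Real.sin (c / 2) : ℝ) : ℂ) ^ 3 := by
  simp only [exp_ofReal_smul_τ]
  exact trace_prod_smul_one_add_smul_neg_I_smul_σ _ _
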